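/- Let Δ be a quasi-forest with at least two facets, n vertices, and r = min_i{r_i}. Then there exists a vertex v of Δ whose number of non-neighbours in the 1-skeleton of Δ equals n − r − 2 (the projective dimension of k[Δ]) if and only if there is a free vertex v in a facet F of Δ with dim F = r + 1 such that F meets the rest of Δ in a simplex of dimension r. -/

import Mathlib

/-- Data of a quasi-forest on vertex type `V`: an ordered list of facets
`F 0, …, F (k-1)` of a simplicial complex, where each facet meets the union of
the previous ones in a subset of one of them (so the intersection is a common
face, i.e. a simplex, possibly empty), and no facet is contained in another. -/
structure QuasiForest (V : Type*) [DecidableEq V] (k : ℕ) where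
  F : Fin k → Finset V
  facet : ∀ i j : Fin k, i ≠ j → ¬ F i ⊆ F j
  attach : ∀ i : Fin k, 0 < (i : ℕ) →
    ∃ j < i, ((Finset.univ.filter (fun j : Fin k => j < i)).biUnion F) ∩ F i ⊆ F j

namespace QuasiForest
open scoped Classical

variable {V : Type*} [DecidableEq V] {k : ℕ} (Q : QuasiForest V k)

/-- The attachment face `G i = (F 0 ∪ ⋯ ∪ F (i-1)) ∩ F i`. -/
def G (i : Fin k) : Finset V :=
  ((Finset.univ.filter (fun j : Fin k => j < i)).biUnion Q.F) ∩ Q.F i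

/-- The faces of the quasi-forest: all subsets of the facets. -/
def faces : Set (Finset V) := {s | ∃ i, s ⊆ Q.F i}

/-- The vertex set of the quasi-forest. -/
def verts : Finset V := Finset.univ.biUnion Q.F

/-- `minG = r + 1`, the minimal number of vertices of an attachment face
(`r = min rᵢ` is its minimal dimension). -/
noncomputable def minG : ℕ := sInf {n | ∃ i : Fin k, 0 < (i : ℕ) ∧ (Q.G i).card = n}

/-- The non-neighbours of `v` among the vertices: the neighbours of `v` in the
complement of the 1-skeleton. -/
noncomputable def nonNbrs [Fintype V] (v : V) : Finset V :=
  (Q.verts.erase v).filter (fun u => ({v, u} : Finset V) ∉ Q.faces)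


end QuasiForest

/-- The Stanley–Reisner ideal of a simplicial complex `Δ` (given by its set of
faces): generated by the squarefree monomials corresponding to non-faces. -/
noncomputable def SRIdeal (kk : Type*) [Field kk] {V : Type*} (Δ : Set (Finset V)) :
    Ideal (MvPolynomial V kk) :=
  Ideal.span {m | ∃ s : Finset V, s ∉ Δ ∧ m = ∏ v ∈ s, MvPolynomial.X v}

/-- The Stanley–Reisner ring `k[Δ]`. -/
abbrev SRRing (kk : Type*) [Field kk] {V : Type*} (Δ : Set (Finset V)) :=
  MvPolynomial V kk ⧸ SRIdeal kk Δ

open CategoryTheory in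
/-- The projective dimension of a module: the least `n` (possibly `⊤`, i.e. no
such `n`) such that `M` admits a projective resolution of length `n`. -/
noncomputable def projDim (R : Type*) [Ring R] (M : ModuleCat R) : ℕ∞ :=
  sInf {n : ℕ∞ | ∃ P : ProjectiveResolution M,
    ∀ i : ℕ, n < (i : ℕ∞) → Limits.IsZero (P.complex.X i)}

/-- The `I`-depth of a module `M`: the supremum of lengths of `M`-regular
sequences with entries in `I`. -/
noncomputable def idealDepth {R : Type*} [CommRing R] (I : Ideal R)
    (M : Type*) [AddCommGroup M] [Module R M] : ℕ∞ :=
  sSup {n : ℕ∞ | ∃ rs : List R, (rs.length : ℕ∞) = n ∧ (∀ x ∈ rs, x ∈ I) ∧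
    RingTheory.Sequence.IsRegular M rs}

/-- The irrelevant maximal ideal of a polynomial ring. -/
noncomputable def irrel (kk : Type*) [Field kk] (V : Type*) : Ideal (MvPolynomial V kk) :=
  Ideal.span (Set.range MvPolynomial.X)

/-- The dimension over `k` of the `i`-th graded piece of `S/I`. -/
noncomputable def hilbertCoeff (kk : Type*) [Field kk] {V : Type*}
    (I : Ideal (MvPolynomial V kk)) (i : ℕ) : ℕ :=
  Module.finrank kk (Submodule.map (Ideal.Quotient.mkₐ kk I).toLinearMap
    (MvPolynomial.homogeneousSubmodule V kk i))

/-- The Hilbert series `∑ᵢ dim_k (S/I)ᵢ tⁱ` of `S/I`, as a power series over `ℚ`. -/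
noncomputable def hilbertSeries (kk : Type*) [Field kk] {V : Type*}
    (I : Ideal (MvPolynomial V kk)) : PowerSeries ℚ :=
  PowerSeries.mk fun i => (hilbertCoeff kk I i : ℚ)


/-!
The non-neighbours of `v` are the vertices outside the star of `v` (the union of the facets
containing `v`). Every facet `F i` properly contains an attachment face lying in another facet,
so `minG < |F i|`; hence `n − minG − 1` non-neighbours force the star of `v` to be a single facet
with `minG + 1` vertices, i.e. `v` is free in a smallest possible facet. That facet meets the rest
of `Δ` in at most `minG` vertices (it misses `v`), yet contains an attachment face of size
`≥ minG` lying in another facet, so the two coincide.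
-/

namespace QuasiForest

variable {V : Type*} [DecidableEq V] {k : ℕ} (Q : QuasiForest V k)

def star (v : V) : Finset V :=
  (Finset.univ.filter (fun j => v ∈ Q.F j)).biUnion Q.F

def others (i : Fin k) : Finset V :=
  (Finset.univ.filter (fun j : Fin k => j ≠ i)).biUnion Q.F

lemma mem_star {v x : V} : x ∈ Q.star v ↔ ∃ j, v ∈ Q.F j ∧ x ∈ Q.F j := by
  simp [star]

lemma mem_others {i : Fin k} {x : V} : x ∈ Q.others i ↔ ∃ j, j ≠ i ∧ x ∈ Q.F j := by
  simp [others]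

lemma F_subset_verts (i : Fin k) : Q.F i ⊆ Q.verts :=
  Finset.subset_biUnion_of_mem Q.F (Finset.mem_univ i)

lemma star_subset_verts (v : V) : Q.star v ⊆ Q.verts :=
  Finset.biUnion_subset.2 fun j _ => Q.F_subset_verts j

lemma F_subset_star {v : V} {i : Fin k} (hv : v ∈ Q.F i) : Q.F i ⊆ Q.star v :=
  fun _ hx => Q.mem_star.2 ⟨i, hv, hx⟩

lemma F_subset_others {i j : Fin k} (hji : j ≠ i) : Q.F j ⊆ Q.others i :=
  fun _ hx => Q.mem_others.2 ⟨j, hji, hx⟩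

lemma star_eq_F_iff {v : V} {i : Fin k} (hv : v ∈ Q.F i) :
    Q.star v = Q.F i ↔ ∀ j, j ≠ i → v ∉ Q.F j := by
  constructor
  · intro h j hji hvj
    exact Q.facet j i hji (h ▸ Q.F_subset_star hvj)
  · intro hfree
    refine (Q.F_subset_star hv).antisymm' fun x hx => ?_
    obtain ⟨j, hvj, hxj⟩ := Q.mem_star.1 hx
    obtain rfl : j = i := by_contra fun hji => hfree j hji hvj
    exact hxj

lemma nonNbrs_eq_verts_sdiff_star [Fintype V] (v : V) :
    Q.nonNbrs v = Q.verts \ Q.star v := by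
  ext u
  simp only [nonNbrs, faces, Finset.mem_filter, Finset.mem_erase, Finset.mem_sdiff,
    mem_star, Set.mem_ofPred_eq, Finset.insert_subset_iff, Finset.singleton_subset_iff]
  constructor
  · rintro ⟨⟨-, hu⟩, hnf⟩
    exact ⟨hu, fun ⟨j, hvj, huj⟩ => hnf ⟨j, hvj, huj⟩⟩
  · rintro ⟨hu, hn⟩
    refine ⟨⟨?_, hu⟩, fun ⟨j, hvj, huj⟩ => hn ⟨j, hvj, huj⟩⟩
    rintro rfl
    obtain ⟨j, -, hj⟩ := Finset.mem_biUnion.1 hu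
    exact hn ⟨j, hj, hj⟩

lemma card_nonNbrs [Fintype V] (v : V) :
    (Q.nonNbrs v).card = Q.verts.card - (Q.star v).card := by
  rw [nonNbrs_eq_verts_sdiff_star, Finset.card_sdiff_of_subset (Q.star_subset_verts v)]

lemma minG_le_card_G {i : Fin k} (hi : 0 < (i : ℕ)) : Q.minG ≤ (Q.G i).card :=
  Nat.sInf_le ⟨i, hi, rfl⟩

/-- For `i > 0` take `G i` itself; `F 0` contains `G 1 = F 0 ∩ F 1`. -/
lemma exists_G_subset_inter (hk : 2 ≤ k) (i : Fin k) :
    ∃ i' : Fin k, 0 < (i' : ℕ) ∧ ∃ j, j ≠ i ∧ Q.G i' ⊆ Q.F i ∩ Q.F j := by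
  rcases Nat.eq_zero_or_pos (i : ℕ) with hi | hi
  · refine ⟨⟨1, hk⟩, Nat.one_pos, ⟨1, hk⟩, fun h => by simp [← h] at hi, fun x hx => ?_⟩
    obtain ⟨hx, hx1⟩ := Finset.mem_inter.1 hx
    obtain ⟨j, hj, hxj⟩ := Finset.mem_biUnion.1 hx
    obtain rfl : j = i := Fin.ext (by simp [Fin.lt_def] at hj; omega)
    exact Finset.mem_inter.2 ⟨hxj, hx1⟩
  · obtain ⟨j, hji, hG⟩ := Q.attach i hi
    exact ⟨i, hi, j, hji.ne, Finset.subset_inter Finset.inter_subset_right hG⟩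

lemma minG_lt_card_F (hk : 2 ≤ k) (i : Fin k) : Q.minG < (Q.F i).card := by
  obtain ⟨i', hi', j, hji, hG⟩ := Q.exists_G_subset_inter hk i
  obtain ⟨x, hxi, hxj⟩ := Finset.not_subset.1 (Q.facet i j hji.symm)
  have hssub : Q.G i' ⊂ Q.F i :=
    (Finset.ssubset_iff_of_subset (hG.trans Finset.inter_subset_left)).2
      ⟨x, hxi, fun hx => hxj (Finset.mem_inter.1 (hG hx)).2⟩
  exact (Q.minG_le_card_G hi').trans_lt (Finset.card_lt_card hssub)

lemma inter_others_of_free (hk : 2 ≤ k) {v : V} {i : Fin k} (hv : v ∈ Q.F i)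
    (hfree : ∀ j, j ≠ i → v ∉ Q.F j) (hcard : (Q.F i).card = Q.minG + 1) :
    (Q.F i ∩ Q.others i).card = Q.minG ∧ ∃ j, j ≠ i ∧ Q.F i ∩ Q.others i ⊆ Q.F j := by
  obtain ⟨i', hi', j, hji, hG⟩ := Q.exists_G_subset_inter hk i
  have hGsub : Q.G i' ⊆ Q.F i ∩ Q.others i :=
    hG.trans (Finset.inter_subset_inter_left (Q.F_subset_others hji))
  have hssub : Q.F i ∩ Q.others i ⊂ Q.F i :=
    (Finset.ssubset_iff_of_subset Finset.inter_subset_left).2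
      ⟨v, hv, fun h => by
        obtain ⟨j, hji, hvj⟩ := Q.mem_others.1 (Finset.mem_inter.1 h).2
        exact hfree j hji hvj⟩
  have hlt := Finset.card_lt_card hssub
  have hle := Finset.card_le_card hGsub
  have hmin := Q.minG_le_card_G hi'
  have heq : Q.G i' = Q.F i ∩ Q.others i := Finset.eq_of_subset_of_card_le hGsub (by omega)
  exact ⟨by omega, j, hji, heq ▸ hG.trans Finset.inter_subset_right⟩

end QuasiForest

/-- for a quasi-forest `Δ` with at least two facets, there is a
vertex whose number of non-neighbours in the 1-skeleton equals
`n − r − 2 = n − minG − 1` (the projective dimension of `k[Δ]`) iff there is a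
free vertex `v` in a facet `F` with `dim F = r + 1` (i.e. `card F = minG + 1`)
such that `F` meets the rest of `Δ` in a simplex of dimension `r`
(a subset of another facet of cardinality `minG`). -/
theorem nonNbrs_eq_pd_iff_free_vertex {V : Type*} [DecidableEq V] {k : ℕ}
    [Fintype V] (hk : 2 ≤ k) (Q : QuasiForest V k) :
    (∃ v ∈ Q.verts, (Q.nonNbrs v).card = Q.verts.card - Q.minG - 1) ↔
      (∃ i : Fin k, ∃ v ∈ Q.F i,
        (∀ j, j ≠ i → v ∉ Q.F j) ∧
        (Q.F i).card = Q.minG + 1 ∧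
        (Q.F i ∩ ((Finset.univ.filter (fun j : Fin k => j ≠ i)).biUnion Q.F)).card
          = Q.minG ∧
        ∃ j, j ≠ i ∧
          Q.F i ∩ ((Finset.univ.filter (fun j : Fin k => j ≠ i)).biUnion Q.F)
            ⊆ Q.F j) := by
  constructor
  · rintro ⟨v, hv, hcard⟩
    obtain ⟨i, -, hvi⟩ := Finset.mem_biUnion.1 hv
    have hlt := Q.minG_lt_card_F hk i
    have hFstar := Q.F_subset_star hvi
    have hstar := Finset.card_le_card (Q.star_subset_verts v)
    have hle := Finset.card_le_card hFstar
    rw [Q.card_nonNbrs] at hcard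
    have hstar_eq : Q.star v = Q.F i :=
      (Finset.eq_of_subset_of_card_le hFstar (by omega)).symm
    have hfree := (Q.star_eq_F_iff hvi).1 hstar_eq
    have hFcard : (Q.F i).card = Q.minG + 1 := by rw [← hstar_eq]; omega
    exact ⟨i, v, hvi, hfree, hFcard, Q.inter_others_of_free hk hvi hfree hFcard⟩
  · rintro ⟨i, v, hv, hfree, hFcard, -⟩
    refine ⟨v, Q.F_subset_verts i hv, ?_⟩
    rw [Q.card_nonNbrs, (Q.star_eq_F_iff hv).2 hfree, hFcard]
    omega
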